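/- arXiv:2403.03321 — 2 statements merged into one kernel-verified Lean document; each statement's English description precedes it below -/
import Mathlib

section
/- Let K ⊆ ℝⁿ be the closed unit disk Dⁿ. There exists a continuous map χ : Dⁿ × Dⁿ → Homeo(ℝⁿ) (with Homeo(ℝⁿ) topologized by the compact-open topology) such that: (i) for each (x,y) ∈ Dⁿ × Dⁿ, the homeomorphism χ(x,y) has compact support and satisfies χ(x,y)(x) = y; and (ii) for each x ∈ Dⁿ, χ(x,x) = id. -/
/-!
For `c ∈ ℝⁿ` let `h_c z = z + ψ(z) • c`, where `ψ` is the radial plateau equal to `1` on `Dⁿ`,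
to `0` outside the ball of radius `5`, with slope `1/4`. Then `h_c - id` is `‖c‖/4`-Lipschitz, so
for `‖c‖ ≤ 2` the map `h_c` is a homeomorphism (it approximates the identity) and is uniformly
anti-Lipschitz with constant `2`. Take `χ(x, y) = h_{y - x}`: it sends `x` to `y` because `ψ = 1`
on `Dⁿ`, it is supported in the ball of radius `5`, and `h_0 = id`. The uniform anti-Lipschitz
bound is what makes the inverses depend continuously on `(x, y)`.
-/

open Metric Set Filter Topology
open scoped NNReal

theorem Homeomorph.continuous_uncurry_symm_of_antilipschitzWith {P X : Type*}
    [TopologicalSpace P] [PseudoMetricSpace X] {F : P → X ≃ₜ X} {K : ℝ≥0}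
    (hF : Continuous fun q : P × X => F q.1 q.2) (hK : ∀ p, AntilipschitzWith K (F p)) :
    Continuous fun q : P × X => (F q.1).symm q.2 := by
  rw [continuous_iff_continuousAt]
  rintro ⟨p, w⟩
  set a := (F p).symm w
  have hle : ∀ q : P × X, dist ((F q.1).symm q.2) a ≤ K * dist q.2 (F q.1 a) := fun q => by
    simpa using (hK q.1).le_mul_dist ((F q.1).symm q.2) a
  have hmove : Tendsto (fun q : P × X => F q.1 a) (𝓝 (p, w)) (𝓝 w) := by
    have hcont : Continuous fun q : P × X => F q.1 a :=
      hF.comp (continuous_fst.prodMk continuous_const)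
    simpa [a] using hcont.tendsto (p, w)
  have hsmall : Tendsto (fun q : P × X => K * dist q.2 (F q.1 a)) (𝓝 (p, w)) (𝓝 0) := by
    simpa using ((continuous_snd.tendsto (p, w)).dist hmove).const_mul (K : ℝ)
  exact tendsto_iff_dist_tendsto_zero.2 (squeeze_zero (fun _ => dist_nonneg) hle hsmall)

section Plateau

variable {E : Type*} [SeminormedAddCommGroup E]

noncomputable def plateau (z : E) : ℝ := max 0 (min 1 ((5 - ‖z‖) / 4))

theorem plateau_eq_one {z : E} (hz : ‖z‖ ≤ 1) : plateau z = 1 := by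
  rw [plateau, min_eq_left (by linarith), max_eq_right zero_le_one]

theorem plateau_eq_zero {z : E} (hz : 5 ≤ ‖z‖) : plateau z = 0 := by
  rw [plateau, max_eq_left ((min_le_right _ _).trans (by linarith))]

theorem lipschitzWith_plateau : LipschitzWith 4⁻¹ (plateau : E → ℝ) := by
  have : LipschitzWith 4⁻¹ fun z : E => (5 - ‖z‖) / 4 := by
    refine LipschitzWith.of_dist_le_mul fun z w => ?_
    rw [Real.dist_eq, dist_eq_norm, show (5 - ‖z‖) / 4 - (5 - ‖w‖) / 4 = (‖w‖ - ‖z‖) / 4 by ring,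
      abs_div, abs_of_pos (by norm_num : (0 : ℝ) < 4), abs_sub_comm]
    push_cast
    linarith [abs_norm_sub_norm_le z w]
  exact (this.const_min 1).const_max 0

end Plateau

theorem LipschitzWith.smul_const {α 𝕜 E : Type*} [PseudoMetricSpace α] [NormedField 𝕜]
    [SeminormedAddCommGroup E] [NormedSpace 𝕜 E] {ψ : α → 𝕜} {K : ℝ≥0}
    (hψ : LipschitzWith K ψ) (c : E) : LipschitzWith (K * ‖c‖₊) fun z => ψ z • c := by
  refine LipschitzWith.of_dist_le_mul fun z w => ?_
  rw [dist_eq_norm, ← sub_smul, norm_smul, ← dist_eq_norm, NNReal.coe_mul, coe_nnnorm,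
    mul_right_comm]
  exact mul_le_mul_of_nonneg_right (hψ.dist_le_mul z w) (norm_nonneg c)

section BumpShift

variable {E : Type*} [NormedAddCommGroup E] [NormedSpace ℝ E]

theorem subsingleton_or_lt_nnnorm_refl_symm_inv {k : ℝ≥0} (hk : k < 1) :
    Subsingleton E ∨ k < ‖((ContinuousLinearEquiv.refl ℝ E).symm : E →L[ℝ] E)‖₊⁻¹ := by
  rcases subsingleton_or_nontrivial E with hE | hE
  · exact Or.inl hE
  · right
    simpa using hk

variable {ψ : E → ℝ} {K : ℝ≥0}

theorem approximatesLinearOn_add_smul (hψ : LipschitzWith K ψ) (c : E) :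
    ApproximatesLinearOn (fun z => z + ψ z • c) (ContinuousLinearEquiv.refl ℝ E : E →L[ℝ] E)
      univ (K * ‖c‖₊) := by
  refine ApproximatesLinearOn.approximatesLinearOn_iff_lipschitzOnWith.2 ?_
  have hsub : (fun z => z + ψ z • c) - ⇑(ContinuousLinearEquiv.refl ℝ E : E →L[ℝ] E) =
      fun z => ψ z • c := by
    ext z
    simp
  exact hsub ▸ (hψ.smul_const c).lipschitzOnWith

variable [CompleteSpace E]

noncomputable def bumpShift (hψ : LipschitzWith K ψ) (c : E) (hc : K * ‖c‖₊ < 1) : E ≃ₜ E :=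
  (approximatesLinearOn_add_smul hψ c).toHomeomorph _ (subsingleton_or_lt_nnnorm_refl_symm_inv hc)

@[simp]
theorem bumpShift_apply (hψ : LipschitzWith K ψ) (c : E) (hc : K * ‖c‖₊ < 1) (z : E) :
    bumpShift hψ c hc z = z + ψ z • c :=
  rfl

theorem antilipschitzWith_bumpShift (hψ : LipschitzWith K ψ) (c : E) (hc : K * ‖c‖₊ < 1)
    {L : ℝ≥0} (hL : K * ‖c‖₊ ≤ L) (hL1 : L < 1) :
    AntilipschitzWith (1 - L)⁻¹ (bumpShift hψ c hc) := by
  have := AntilipschitzWith.id.add_lipschitzWith ((hψ.smul_const c).weaken hL) (by simpa using hL1)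
  rw [inv_one] at this
  exact this

end BumpShift

/-- With `Dⁿ` the closed unit disk of `ℝⁿ`, there is a continuous map
`χ : Dⁿ × Dⁿ → Homeo(ℝⁿ)` (continuous into the compact-open topology on maps `ℝⁿ → ℝⁿ`)
such that each `χ(x,y)` is a compactly supported homeomorphism with `χ(x,y)(x) = y`,
and `χ(x,x) = id` for every `x`. -/
theorem statement2 (n : ℕ) :
    ∃ χ : (closedBall (0 : EuclideanSpace ℝ (Fin n)) 1) ×
          (closedBall (0 : EuclideanSpace ℝ (Fin n)) 1) →
          (EuclideanSpace ℝ (Fin n) ≃ₜ EuclideanSpace ℝ (Fin n)),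
      Continuous (fun p => (ContinuousMap.mk (χ p) (χ p).continuous :
        C(EuclideanSpace ℝ (Fin n), EuclideanSpace ℝ (Fin n)))) ∧
      Continuous (fun p => (ContinuousMap.mk ((χ p).symm) (χ p).symm.continuous :
        C(EuclideanSpace ℝ (Fin n), EuclideanSpace ℝ (Fin n)))) ∧
      (∀ p, ∃ K : Set (EuclideanSpace ℝ (Fin n)), IsCompact K ∧
        ∀ z ∉ K, χ p z = z) ∧
      (∀ p, χ p (p.1 : EuclideanSpace ℝ (Fin n)) = (p.2 : EuclideanSpace ℝ (Fin n))) ∧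
      (∀ x, χ (x, x) = Homeomorph.refl _) := by
  set D := closedBall (0 : EuclideanSpace ℝ (Fin n)) 1
  have hsmall : ∀ p : D × D, 4⁻¹ * ‖(p.2 : EuclideanSpace ℝ (Fin n)) - p.1‖₊ ≤ 2⁻¹ := by
    rintro ⟨⟨x, hx⟩, ⟨y, hy⟩⟩
    rw [mem_closedBall_zero_iff] at hx hy
    rw [← NNReal.coe_le_coe]
    push_cast
    linarith [norm_sub_le y x]
  have hψ := lipschitzWith_plateau (E := EuclideanSpace ℝ (Fin n))
  let χ (p : D × D) := bumpShift hψ _ ((hsmall p).trans_lt (by norm_num))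
  have hχ : Continuous fun q : (D × D) × EuclideanSpace ℝ (Fin n) => χ q.1 q.2 := by
    simp only [χ, bumpShift_apply]
    have := hψ.continuous
    fun_prop
  refine ⟨χ, ContinuousMap.continuous_of_continuous_uncurry _ hχ,
    ContinuousMap.continuous_of_continuous_uncurry _
      (Homeomorph.continuous_uncurry_symm_of_antilipschitzWith hχ fun p =>
        antilipschitzWith_bumpShift _ _ _ (hsmall p) (by norm_num)), fun p => ?_, fun p => ?_,
    fun x => Homeomorph.ext fun z => by simp [χ]⟩
  · refine ⟨closedBall 0 5, isCompact_closedBall _ _, fun z hz => ?_⟩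
    rw [mem_closedBall_zero_iff, not_le] at hz
    simp [χ, plateau_eq_zero hz.le]
  · simp [χ, plateau_eq_one (mem_closedBall_zero_iff.1 p.1.2)]
end

section
/- Let M be an n-manifold and S a finite set. The evaluation-at-origins map Emb(ℝⁿ × S, M) → Conf(S, M), sending an embedding e to the configuration (e(0,s))_{s ∈ S}, is a Serre fibration. -/
/-
A map `p` is a Serre fibration as soon as every point of the base has a neighbourhood `U` over
which `p` carries a flat transport: fibre maps `τ c c' : p⁻¹ c → p⁻¹ c'` (`c, c' ∈ U`), jointly
continuous, with `τ c c = id` and `τ c' c'' ∘ τ c c' = τ c c''`. Pulling back along a homotopy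
on a cube, the Lebesgue number lemma makes boxes of side `1/N` land in such neighbourhoods; two
transports over adjacent slabs glue by first transporting along the retraction onto the common
face, so coordinate by coordinate one gets a transport over the whole cube, and the lift of the
homotopy is the initial lift transported along each path `t ↦ (q, t)`.

For `evalOrigins`, take charts at the points of a configuration `c₀` with pairwise disjoint
balls. In a ball, `y ↦ y + tent y • a` moves the centre by `a`; for `‖a‖ < r` it is a
homeomorphism whose inverse is the fixed point of a contraction, and the contraction estimate
gives joint continuity in `a`. Composing these pushes yields homeomorphisms `g c` of `M`,
continuous in `c` near `c₀`, with `g c ∘ c₀ = c`, and `e ↦ g c' ∘ (g c)⁻¹ ∘ e` is a flat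
transport for `evalOrigins`.
-/

/-- A map is a Serre fibration if it has the homotopy lifting property with respect to
all cubes `Iᵐ`. -/
def IsSerreFibration {X Y : Type*} [TopologicalSpace X] [TopologicalSpace Y]
    (p : X → Y) : Prop :=
  ∀ (m : ℕ) (F : C((Fin m → unitInterval) × unitInterval, Y))
    (f₀ : C(Fin m → unitInterval, X)),
    (∀ q, p (f₀ q) = F (q, 0)) →
    ∃ G : C((Fin m → unitInterval) × unitInterval, X),
      (∀ q, G (q, 0) = f₀ q) ∧ ∀ z, p (G z) = F z

/-- The space `Emb(ℝⁿ × S, M)` of open embeddings of `S` copies of `ℝⁿ` into `M`,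
topologized (as a subspace of the mapping space) with the compact-open topology. -/
def EmbSp (n : ℕ) (S M : Type*) [TopologicalSpace S] [TopologicalSpace M] :=
  {e : C(EuclideanSpace ℝ (Fin n) × S, M) // Topology.IsOpenEmbedding e}

noncomputable instance (n : ℕ) (S M : Type*) [TopologicalSpace S] [TopologicalSpace M] :
    TopologicalSpace (EmbSp n S M) :=
  instTopologicalSpaceSubtype

/-- The configuration space `Conf(S, M)` of injections `S → M`, as a subspace of `Mˢ`. -/
def ConfSp (S M : Type*) [TopologicalSpace M] := {c : S → M // Function.Injective c}

instance (S M : Type*) [TopologicalSpace M] : TopologicalSpace (ConfSp S M) :=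
  instTopologicalSpaceSubtype

/-- Evaluation at the origins, `Emb(ℝⁿ × S, M) → Conf(S, M)`. -/
def evalOrigins (n : ℕ) (S M : Type*) [TopologicalSpace S] [TopologicalSpace M]
    (e : EmbSp n S M) : ConfSp S M :=
  ⟨fun s => e.1 (0, s), fun s t h => by
    simpa using congrArg Prod.snd
      (e.2.injective (a₁ := ((0 : EuclideanSpace ℝ (Fin n)), s)) (a₂ := (0, t)) h)⟩

open Set Filter Topology Function Metric unitInterval

section Transport

variable {X Y Z Z' : Type*} [TopologicalSpace X] [TopologicalSpace Z] [TopologicalSpace Z']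

theorem ContinuousOn.piecewise_of_isClosed {f g : Z → X} {D s t : Set Z} [DecidablePred (· ∈ s)]
    (hs : IsClosed s) (ht : IsClosed t) (hD : D ⊆ s ∪ t) (hf : ContinuousOn f (D ∩ s))
    (hg : ContinuousOn g (D ∩ t)) (hfg : EqOn f g (D ∩ s ∩ t)) :
    ContinuousOn (s.piecewise f g) D := by
  have h₁ : ContinuousOn (s.piecewise f g) (D ∩ s) :=
    hf.congr fun z hz => piecewise_eq_of_mem _ _ _ hz.2
  have h₂ : ContinuousOn (s.piecewise f g) (D ∩ t) := hg.congr fun z hz => by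
    by_cases hzs : z ∈ s
    · rw [piecewise_eq_of_mem _ _ _ hzs, hfg ⟨⟨hz.1, hzs⟩, hz.2⟩]
    · exact piecewise_eq_of_notMem _ _ _ hzs
  intro z hz
  rw [← inter_eq_left.2 hD, inter_union_distrib_left]
  refine ContinuousWithinAt.union ?_ ?_
  · by_cases hzs : z ∈ s
    · exact h₁ z ⟨hz, hzs⟩
    · exact continuousWithinAt_of_notMem_closure fun h =>
        hzs (hs.closure_eq ▸ closure_mono inter_subset_right h)
  · by_cases hzt : z ∈ t
    · exact h₂ z ⟨hz, hzt⟩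
    · exact continuousWithinAt_of_notMem_closure fun h =>
        hzt (ht.closure_eq ▸ closure_mono inter_subset_right h)

/-- A trivialisation of the pullback of `p` along `F` over `K`, in the form of a flat
connection: `τ z z'` carries the fibre over `F z` to the fibre over `F z'`. -/
structure IsTransport (p : X → Y) (F : Z → Y) (K : Set Z) (τ : Z → Z → X → X) : Prop where
  continuousOn : ContinuousOn (fun q : (Z × Z) × X => τ q.1.1 q.1.2 q.2)
    {q | q.1 ∈ K ×ˢ K ∧ p q.2 = F q.1.1}
  mapsTo : ∀ z ∈ K, ∀ z' ∈ K, ∀ e, p e = F z → p (τ z z' e) = F z'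
  self : ∀ z ∈ K, ∀ e, p e = F z → τ z z e = e
  trans : ∀ z ∈ K, ∀ z' ∈ K, ∀ z'' ∈ K, ∀ e, p e = F z → τ z' z'' (τ z z' e) = τ z z'' e

def HasTransport (p : X → Y) (F : Z → Y) (K : Set Z) : Prop :=
  ∃ τ, IsTransport p F K τ

def LocallyTransported [TopologicalSpace Y] (p : X → Y) : Prop :=
  ∀ y, ∃ U ∈ 𝓝 y, HasTransport p id U

variable {p : X → Y} {F : Z → Y}

theorem HasTransport.comp {K : Set Z} (h : HasTransport p F K) {g : Z' → Z} (hg : Continuous g)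
    {K' : Set Z'} (hK : MapsTo g K' K) : HasTransport p (F ∘ g) K' := by
  obtain ⟨τ, hτ⟩ := h
  refine ⟨fun z z' => τ (g z) (g z'), ?_, ?_, ?_, ?_⟩
  · refine hτ.continuousOn.comp (Continuous.continuousOn
      (f := fun q : (Z' × Z') × X => ((g q.1.1, g q.1.2), q.2)) (by fun_prop)) ?_
    exact fun q hq => ⟨⟨hK hq.1.1, hK hq.1.2⟩, hq.2⟩
  · exact fun z hz z' hz' => hτ.mapsTo _ (hK hz) _ (hK hz')
  · exact fun z hz => hτ.self _ (hK hz)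
  · exact fun z hz z' hz' z'' hz'' => hτ.trans _ (hK hz) _ (hK hz') _ (hK hz'')

theorem IsTransport.of_retraction {K K₁ : Set Z} {τ : Z → Z → X → X} (hτ : IsTransport p F K₁ τ)
    {ρ : Z → Z} {α β : Z × X → X} (hρ : ContinuousOn ρ K) (hρK : MapsTo ρ K K₁)
    (hα : ContinuousOn α {q | q.1 ∈ K ∧ p q.2 = F q.1})
    (hβ : ContinuousOn β {q | q.1 ∈ K ∧ p q.2 = F (ρ q.1)})
    (hαF : ∀ z ∈ K, ∀ e, p e = F z → p (α (z, e)) = F (ρ z))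
    (hβF : ∀ z ∈ K, ∀ x, p x = F (ρ z) → p (β (z, x)) = F z)
    (hαβ : ∀ z ∈ K, ∀ x, p x = F (ρ z) → α (z, β (z, x)) = x)
    (hβα : ∀ z ∈ K, ∀ e, p e = F z → β (z, α (z, e)) = e) :
    IsTransport p F K fun z z' e => β (z', τ (ρ z) (ρ z') (α (z, e))) where
  continuousOn := by
    have hαq : ContinuousOn (fun q : (Z × Z) × X => α (q.1.1, q.2))
        {q | q.1 ∈ K ×ˢ K ∧ p q.2 = F q.1.1} :=
      hα.comp (by fun_prop) fun q hq => ⟨hq.1.1, hq.2⟩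
    have hτq := hτ.continuousOn.comp ((hρ.comp (by fun_prop) fun q hq => hq.1.1).prodMk
      (hρ.comp (by fun_prop) fun q hq => hq.1.2) |>.prodMk hαq)
      fun q hq => ⟨⟨hρK hq.1.1, hρK hq.1.2⟩, hαF _ hq.1.1 _ hq.2⟩
    refine hβ.comp ((continuous_snd.comp continuous_fst).continuousOn.prodMk hτq) ?_
    exact fun q hq => ⟨hq.1.2, hτ.mapsTo _ (hρK hq.1.1) _ (hρK hq.1.2) _ (hαF _ hq.1.1 _ hq.2)⟩
  mapsTo z hz z' hz' e he :=
    hβF z' hz' _ (hτ.mapsTo _ (hρK hz) _ (hρK hz') _ (hαF z hz e he))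
  self z hz e he := by
    simp only [hτ.self _ (hρK hz) _ (hαF z hz e he), hβα z hz e he]
  trans z hz z' hz' z'' hz'' e he := by
    have he' := hαF z hz e he
    simp only [hαβ z' hz' _ (hτ.mapsTo _ (hρK hz) _ (hρK hz') _ he'),
      hτ.trans _ (hρK hz) _ (hρK hz') _ (hρK hz'') _ he']

theorem IsTransport.continuousOn_piecewise {K₁ K₂ : Set Z} [DecidablePred (· ∈ K₁)]
    {τ : Z → Z → X → X} (hτ : IsTransport p F K₂ τ) (hK₁ : IsClosed K₁) (hK₂ : IsClosed K₂)
    {u v : Z → Z} (hu : ContinuousOn u K₂) (hv : ContinuousOn v K₂) (huK : MapsTo u K₂ K₂)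
    (hvK : MapsTo v K₂ K₂) (huv : ∀ z ∈ K₁ ∩ K₂, u z = v z) {G : Z → Y}
    (hG : ∀ z ∈ K₂, G z = F (u z)) :
    ContinuousOn ({q : Z × X | q.1 ∈ K₁}.piecewise Prod.snd fun q => τ (u q.1) (v q.1) q.2)
      {q | q.1 ∈ K₁ ∪ K₂ ∧ p q.2 = G q.1} := by
  refine ContinuousOn.piecewise_of_isClosed (hK₁.preimage continuous_fst)
    (hK₂.preimage continuous_fst) (fun q hq => hq.1) continuous_snd.continuousOn ?_ ?_
  · refine hτ.continuousOn.comp (((hu.comp continuousOn_fst fun q hq => hq.2).prodMk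
      (hv.comp continuousOn_fst fun q hq => hq.2)).prodMk continuousOn_snd) ?_
    exact fun q hq => ⟨⟨huK hq.2, hvK hq.2⟩, (hG _ hq.2) ▸ hq.1.2⟩
  · rintro ⟨z, e⟩ ⟨⟨⟨-, he⟩, hz₁⟩, hz₂⟩
    rw [hG z hz₂] at he
    simp only [← huv z ⟨hz₁, hz₂⟩, hτ.self _ (huK hz₂) e he]

/-- A point `z ∈ K₂ \ K₁` is first carried by `τ₂` to `ρ z ∈ K₁`. -/
theorem HasTransport.union {K₁ K₂ : Set Z} (h₁ : HasTransport p F K₁)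
    (h₂ : HasTransport p F K₂) (hK₁ : IsClosed K₁) (hK₂ : IsClosed K₂) {ρ : Z → Z}
    (hρ : ContinuousOn ρ (K₁ ∪ K₂)) (hρK₂ : MapsTo ρ K₂ (K₁ ∩ K₂)) (hρK₁ : ∀ z ∈ K₁, ρ z = z) :
    HasTransport p F (K₁ ∪ K₂) := by
  classical
  obtain ⟨τ₁, h₁⟩ := h₁
  obtain ⟨τ₂, h₂⟩ := h₂
  have hρK : MapsTo ρ (K₁ ∪ K₂) K₁ := fun z hz =>
    hz.elim (fun hz₁ => (hρK₁ z hz₁).symm ▸ hz₁) fun hz₂ => (hρK₂ hz₂).1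
  have hout : ∀ z ∈ K₁ ∪ K₂, z ∉ K₁ → z ∈ K₂ ∧ ρ z ∈ K₂ := fun z hz hz₁ =>
    ⟨hz.resolve_left hz₁, (hρK₂ (hz.resolve_left hz₁)).2⟩
  have hρ_id : ∀ z ∈ K₁ ∩ K₂, z = ρ z := fun z hz => (hρK₁ z hz.1).symm
  set α : Z × X → X := {q | q.1 ∈ K₁}.piecewise Prod.snd fun q => τ₂ q.1 (ρ q.1) q.2
  set β : Z × X → X := {q | q.1 ∈ K₁}.piecewise Prod.snd fun q => τ₂ (ρ q.1) q.1 q.2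
  refine ⟨_, h₁.of_retraction (α := α) (β := β) hρ hρK
    (h₂.continuousOn_piecewise (u := fun z => z) hK₁ hK₂ (continuousOn_id' _)
      (hρ.mono subset_union_right) (mapsTo_id _) (fun z hz => (hρK₂ hz).2) hρ_id
      fun _ _ => rfl)
    (h₂.continuousOn_piecewise (v := fun z => z) (G := fun z => F (ρ z)) hK₁ hK₂
      (hρ.mono subset_union_right) (continuousOn_id' _) (fun z hz => (hρK₂ hz).2) (mapsTo_id _)
      (fun z hz => (hρ_id z hz).symm) fun _ _ => rfl)
    ?_ ?_ ?_ ?_⟩ <;> intro z hz x hx <;> by_cases hz₁ : z ∈ K₁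
  · simpa [α, hρK₁ z hz₁, hz₁]
  · simpa [α, hz₁] using h₂.mapsTo z (hout z hz hz₁).1 _ (hout z hz hz₁).2 x hx
  · simpa [β, hρK₁ z hz₁, hz₁] using hx
  · simpa [β, hz₁] using h₂.mapsTo _ (hout z hz hz₁).2 z (hout z hz hz₁).1 x hx
  · simp [α, β, hz₁]
  · obtain ⟨hz₂, hρz⟩ := hout z hz hz₁
    simp only [α, β, piecewise, mem_ofPred_eq, hz₁, if_false]
    rw [h₂.trans _ hρz z hz₂ _ hρz x hx, h₂.self _ hρz x hx]
  · simp [α, β, hz₁]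
  · obtain ⟨hz₂, hρz⟩ := hout z hz hz₁
    simp only [α, β, piecewise, mem_ofPred_eq, hz₁, if_false]
    rw [h₂.trans z hz₂ _ hρz z hz₂ x hx, h₂.self z hz₂ x hx]

theorem HasTransport.exists_lift [TopologicalSpace Y] {F : C(Z × I, Y)}
    (hF : HasTransport p F univ) (f₀ : C(Z, X)) (h₀ : ∀ z, p (f₀ z) = F (z, 0)) :
    ∃ G : C(Z × I, X), (∀ z, G (z, 0) = f₀ z) ∧ ∀ q, p (G q) = F q := by
  obtain ⟨τ, hτ⟩ := hF
  refine ⟨⟨fun q => τ (q.1, 0) q (f₀ q.1), ?_⟩, fun z => hτ.self _ trivial _ (h₀ z),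
    fun q => hτ.mapsTo _ trivial _ trivial _ (h₀ q.1)⟩
  exact hτ.continuousOn.comp_continuous (f := fun q : Z × I => (((q.1, 0), q), f₀ q.1))
    (by fun_prop) fun q => ⟨⟨trivial, trivial⟩, h₀ q.1⟩

end Transport

section Cube

variable {X Y ι : Type*} [TopologicalSpace X] {p : X → Y} {F : (ι → I) → Y}

def cubeBox (J : ι → Set ℝ) : Set (ι → I) := {z | ∀ i, (z i : ℝ) ∈ J i}

theorem isClosed_cubeBox {J : ι → Set ℝ} (hJ : ∀ i, IsClosed (J i)) : IsClosed (cubeBox J) := by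
  simp only [cubeBox, ofPred_forall]
  exact isClosed_iInter fun i => (hJ i).preimage (by fun_prop)

theorem mem_cubeBox_update [DecidableEq ι] {J : ι → Set ℝ} {i : ι} {A : Set ℝ} {z : ι → I} :
    z ∈ cubeBox (update J i A) ↔ (z i : ℝ) ∈ A ∧ ∀ j ≠ i, (z j : ℝ) ∈ J j :=
  forall_update_iff J fun j B => (z j : ℝ) ∈ B

theorem HasTransport.union_cubeBox_update_Icc [DecidableEq ι] {J : ι → Set ℝ}
    (hJ : ∀ i, IsClosed (J i)) (i : ι) {a b : ℝ} {t : I} (hat : a ≤ t) (htb : t ≤ b)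
    (h₁ : HasTransport p F (cubeBox (update J i (Icc a t))))
    (h₂ : HasTransport p F (cubeBox (update J i (Icc t b)))) :
    HasTransport p F (cubeBox (update J i (Icc a b))) := by
  have hunion : cubeBox (update J i (Icc a b)) =
      cubeBox (update J i (Icc a t)) ∪ cubeBox (update J i (Icc t b)) := by
    ext z
    simp only [mem_union, mem_cubeBox_update, ← Icc_union_Icc_eq_Icc hat htb]
    tauto
  have hclosed : ∀ A : Set ℝ, IsClosed A → IsClosed (cubeBox (update J i A)) := fun A hA =>
    isClosed_cubeBox fun j => by
      rcases eq_or_ne j i with rfl | hj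
      · simpa using hA
      · simpa [hj] using hJ j
  rw [hunion]
  refine h₁.union h₂ (hclosed _ isClosed_Icc) (hclosed _ isClosed_Icc)
    (ρ := fun z => update z i (min (z i) t)) (Continuous.continuousOn (by fun_prop)) ?_ ?_
  · intro z hz
    rw [mem_cubeBox_update] at hz
    have hmin : min (z i) t = t := min_eq_right hz.1.1
    simp only [mem_inter_iff, mem_cubeBox_update, update_self, hmin, ne_eq]
    refine ⟨⟨⟨hat, le_rfl⟩, fun j hj => ?_⟩, ⟨le_rfl, htb⟩, fun j hj => ?_⟩ <;>
      simpa [update_of_ne hj] using hz.2 j hj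
  · intro z hz
    rw [mem_cubeBox_update] at hz
    simp [min_eq_left (show z i ≤ t from hz.1.2)]

theorem hasTransport_cubeBox_update_unitInterval [DecidableEq ι] {J : ι → Set ℝ}
    (hJ : ∀ i, IsClosed (J i)) (i : ι) {N : ℕ} (hN : 0 < N)
    (h : ∀ j < N, HasTransport p F (cubeBox (update J i (Icc (j / N) (j / N + 1 / N))))) :
    HasTransport p F (cubeBox (update J i (Icc 0 1))) := by
  have hN' : (0 : ℝ) < N := Nat.cast_pos.2 hN
  suffices ∀ j < N, HasTransport p F (cubeBox (update J i (Icc 0 ((j + 1 : ℕ) / N)))) by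
    have h := this (N - 1) (Nat.sub_lt hN one_pos)
    rwa [Nat.sub_add_cancel (n := N) (m := 1) hN, div_self hN'.ne'] at h
  intro j hj
  induction j with
  | zero => simpa using h 0 hN
  | succ j ih =>
    have ht : ((j + 1 : ℕ) : ℝ) / N ∈ I :=
      ⟨by positivity, (div_le_one hN').2 (by exact_mod_cast hj.le)⟩
    refine (ih (by omega)).union_cubeBox_update_Icc hJ i (t := ⟨_, ht⟩) (by positivity) ?_ ?_
    · exact div_le_div_of_nonneg_right (by push_cast; linarith) hN'.le
    · convert h (j + 1) hj using 5; push_cast; ring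

theorem LocallyTransported.exists_hasTransport_cubeBox [TopologicalSpace Y] [Fintype ι]
    (hp : LocallyTransported p) (hF : Continuous F) : ∃ N : ℕ, 0 < N ∧ ∀ J : ι → Set ℝ,
      (∀ i, ∃ a, J i = Icc a (a + 1 / (N : ℝ))) → HasTransport p F (cubeBox J) := by
  choose U hU hUt using hp
  obtain ⟨δ, hδ, hδU⟩ := lebesgue_number_lemma_of_metric (c := fun y => F ⁻¹' interior (U y))
    isCompact_univ (fun y => isOpen_interior.preimage hF)
    fun z _ => mem_iUnion.2 ⟨F z, mem_interior_iff_mem_nhds.2 (hU (F z))⟩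
  obtain ⟨n, hn⟩ := exists_nat_one_div_lt hδ
  refine ⟨n + 1, n.succ_pos, fun J hJ => ?_⟩
  suffices ∃ y, MapsTo F (cubeBox J) (U y) from this.elim fun y hy => (hUt y).comp hF hy
  rcases (cubeBox J).eq_empty_or_nonempty with hJe | ⟨z₀, hz₀⟩
  · exact ⟨F fun _ => 0, hJe ▸ mapsTo_empty _ _⟩
  obtain ⟨y, hy⟩ := hδU z₀ trivial
  have hN : (0 : ℝ) ≤ 1 / ((n + 1 : ℕ) : ℝ) := by positivity
  refine ⟨y, fun z hz => interior_subset (hy (mem_ball.2 (lt_of_le_of_lt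
    ((dist_pi_le_iff hN).2 fun i => ?_) (by exact_mod_cast hn))))⟩
  obtain ⟨a, ha⟩ := hJ i
  have h := Real.dist_le_of_mem_Icc (ha ▸ hz i) (ha ▸ hz₀ i)
  rwa [add_sub_cancel_left] at h

theorem hasTransport_univ_of_cubeBox [Fintype ι] {N : ℕ} (hN : 0 < N)
    (h : ∀ J : ι → Set ℝ, (∀ i, ∃ a, J i = Icc a (a + 1 / (N : ℝ))) →
      HasTransport p F (cubeBox J)) :
    HasTransport p F univ := by
  classical
  have full : ∀ s : Finset ι, ∀ J : ι → Set ℝ, (∀ i ∈ s, J i = Icc 0 1) →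
      (∀ i ∉ s, ∃ a, J i = Icc a (a + 1 / (N : ℝ))) → HasTransport p F (cubeBox J) := by
    intro s
    induction s using Finset.induction_on with
    | empty => exact fun J _ hJ => h J fun i => hJ i (Finset.notMem_empty i)
    | insert i s hi ih =>
      intro J hfull hsmall
      have hJ : ∀ j, IsClosed (J j) := fun j => by
        by_cases hj : j ∈ insert i s
        · rw [hfull j hj]; exact isClosed_Icc
        · obtain ⟨a, ha⟩ := hsmall j hj; rw [ha]; exact isClosed_Icc
      rw [← update_eq_self i J, hfull i (Finset.mem_insert_self i s)]
      refine hasTransport_cubeBox_update_unitInterval hJ i hN fun j _ => ?_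
      refine ih _ (fun i' hi' => ?_) fun i' hi' => ?_
      · rw [update_of_ne (ne_of_mem_of_not_mem hi' hi)]
        exact hfull i' (Finset.mem_insert_of_mem hi')
      · rcases eq_or_ne i' i with rfl | hne
        · exact ⟨_, update_self ..⟩
        · rw [update_of_ne hne]
          exact hsmall i' (by simp [hne, hi'])
  have huniv : cubeBox (fun _ : ι => Icc (0 : ℝ) 1) = univ :=
    eq_univ_of_forall fun z i => (z i).2
  simpa [huniv] using full Finset.univ _ (fun _ _ => rfl) fun i hi => absurd (Finset.mem_univ i) hi

theorem LocallyTransported.hasTransport_cube [TopologicalSpace Y] [Fintype ι]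
    (hp : LocallyTransported p) (hF : Continuous F) : HasTransport p F univ :=
  let ⟨_, hN, h⟩ := hp.exists_hasTransport_cubeBox hF
  hasTransport_univ_of_cubeBox hN h

end Cube

theorem LocallyTransported.isSerreFibration {X Y : Type*} [TopologicalSpace X]
    [TopologicalSpace Y] {p : X → Y} (hp : LocallyTransported p) :
    IsSerreFibration p := by
  intro m F f₀ h₀
  have hcube := hp.hasTransport_cube
    (F := fun z : Option (Fin m) → I => F (fun i => z (some i), z none)) (by fun_prop)
  refine (hcube.comp (g := fun q : (Fin m → I) × I => fun o => o.elim q.2 q.1) ?_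
    (mapsTo_univ _ _)).exists_lift f₀ h₀
  exact continuous_pi fun o => by
    cases o; exacts [continuous_snd, (continuous_apply _).comp continuous_fst]

noncomputable section Tent

variable {E : Type*} [PseudoMetricSpace E] {x₀ : E} {r : ℝ}

def tent (x₀ : E) (r : ℝ) (y : E) : ℝ := max 0 (1 - dist y x₀ / r)

theorem tent_nonneg (y : E) : 0 ≤ tent x₀ r y := le_max_left _ _

theorem tent_le_one (hr : 0 < r) (y : E) : tent x₀ r y ≤ 1 :=
  max_le zero_le_one (sub_le_self _ (by positivity))

theorem tent_self : tent x₀ r x₀ = 1 := by simp [tent]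

theorem tent_eq_zero (hr : 0 < r) {y : E} (hy : r ≤ dist y x₀) : tent x₀ r y = 0 :=
  max_eq_left (sub_nonpos.2 ((one_le_div hr).2 hy))

theorem abs_tent_sub_tent_le (hr : 0 < r) (y y' : E) :
    |tent x₀ r y - tent x₀ r y'| ≤ dist y y' / r := by
  unfold tent
  rw [max_comm 0, max_comm 0]
  refine (abs_max_sub_max_le_abs _ _ 0).trans ?_
  rw [sub_sub_sub_cancel_left, ← sub_div, abs_div, abs_of_pos hr]
  exact div_le_div_of_nonneg_right ((abs_dist_sub_le y' y x₀).trans_eq (dist_comm _ _)) hr.le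

theorem continuous_tent : Continuous (tent x₀ r) := by
  unfold tent; fun_prop

end Tent

noncomputable section Push

variable {E : Type*} [NormedAddCommGroup E] [NormedSpace ℝ E] {x₀ a a' : E} {r : ℝ}

def push (x₀ : E) (r : ℝ) (a y : E) : E := y + tent x₀ r y • a

theorem continuous_push : Continuous fun q : E × E => push x₀ r q.1 q.2 := by
  unfold push; have := continuous_tent (x₀ := x₀) (r := r); fun_prop

theorem contractingWith_sub_tent_smul (ha : ‖a‖ < r) (w : E) :
    ContractingWith ⟨‖a‖ / r, by have := (norm_nonneg a).trans_lt ha; positivity⟩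
      fun y => w - tent x₀ r y • a := by
  have hr := (norm_nonneg a).trans_lt ha
  refine ⟨(div_lt_one hr).2 ha, LipschitzWith.of_dist_le_mul fun y y' => ?_⟩
  show dist _ _ ≤ ‖a‖ / r * dist y y'
  rw [dist_sub_left, dist_eq_norm, ← sub_smul, norm_smul, Real.norm_eq_abs]
  calc |tent x₀ r y - tent x₀ r y'| * ‖a‖ ≤ dist y y' / r * ‖a‖ := by
        gcongr; exact abs_tent_sub_tent_le hr y y'
    _ = ‖a‖ / r * dist y y' := by ring

variable [CompleteSpace E]

def pushInv (x₀ : E) (ha : ‖a‖ < r) (w : E) : E :=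
  ContractingWith.fixedPoint _ (contractingWith_sub_tent_smul (x₀ := x₀) ha w)

theorem push_pushInv (ha : ‖a‖ < r) (w : E) : push x₀ r a (pushInv x₀ ha w) = w := by
  have h := ContractingWith.fixedPoint_isFixedPt (contractingWith_sub_tent_smul (x₀ := x₀) ha w)
  exact eq_sub_iff_add_eq.1 h.symm

theorem pushInv_push (ha : ‖a‖ < r) (y : E) : pushInv x₀ ha (push x₀ r a y) = y :=
  ((contractingWith_sub_tent_smul ha _).fixedPoint_unique
    (show push x₀ r a y - tent x₀ r y • a = y by simp [push])).symm

theorem dist_pushInv_le (ha : ‖a‖ < r) (ha' : ‖a'‖ < r) (w w' : E) :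
    dist (pushInv x₀ ha w) (pushInv x₀ ha' w') ≤ (dist w w' + dist a a') / (1 - ‖a‖ / r) := by
  have hr := (norm_nonneg a).trans_lt ha
  refine (contractingWith_sub_tent_smul ha w).dist_fixedPoint_fixedPoint_of_dist_le' _
    (ContractingWith.fixedPoint_isFixedPt _) (ContractingWith.fixedPoint_isFixedPt _) fun y => ?_
  rw [dist_eq_norm, sub_sub_sub_comm, ← smul_sub, dist_eq_norm, dist_eq_norm]
  calc ‖(w - w') - tent x₀ r y • (a - a')‖ ≤ ‖w - w'‖ + ‖tent x₀ r y • (a - a')‖ :=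
        norm_sub_le _ _
    _ ≤ ‖w - w'‖ + ‖a - a'‖ := by
        rw [norm_smul, Real.norm_of_nonneg (tent_nonneg y)]
        gcongr
        exact mul_le_of_le_one_left (norm_nonneg _) (tent_le_one hr y)

theorem continuous_pushInv (ha : ‖a‖ < r) : Continuous (pushInv x₀ ha) :=
  continuous_iff_continuousAt.2 fun w => continuousAt_of_locally_lipschitz one_pos
    (1 - ‖a‖ / r)⁻¹ fun w' _ => by
      simpa [div_eq_inv_mul, mul_comm] using dist_pushInv_le (x₀ := x₀) ha ha w' w

/-- For `‖a‖ ≥ r`, where `push x₀ r a` need not be injective, this is the identity. -/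
def pushHomeomorph (x₀ : E) (r : ℝ) (a : E) : E ≃ₜ E :=
  if ha : ‖a‖ < r then
    { toFun := push x₀ r a
      invFun := pushInv x₀ ha
      left_inv := pushInv_push ha
      right_inv := push_pushInv ha
      continuous_toFun := continuous_push.comp (Continuous.prodMk_right a)
      continuous_invFun := continuous_pushInv ha }
  else Homeomorph.refl E

theorem pushHomeomorph_apply (ha : ‖a‖ < r) (y : E) : pushHomeomorph x₀ r a y = push x₀ r a y := by
  simp [pushHomeomorph, ha]

theorem pushHomeomorph_symm_apply (ha : ‖a‖ < r) (w : E) :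
    (pushHomeomorph x₀ r a).symm w = pushInv x₀ ha w := by
  simp [pushHomeomorph, ha]

theorem pushHomeomorph_self (ha : ‖a‖ < r) : pushHomeomorph x₀ r a x₀ = x₀ + a := by
  simp [pushHomeomorph_apply ha, push, tent_self]

theorem pushHomeomorph_apply_of_notMem {y : E} (hy : y ∉ closedBall x₀ r) :
    pushHomeomorph x₀ r a y = y := by
  by_cases ha : ‖a‖ < r
  · have hy := (not_le.1 (mt mem_closedBall.2 hy)).le
    rw [pushHomeomorph_apply ha, push, tent_eq_zero ((norm_nonneg a).trans_lt ha) hy, zero_smul,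
      add_zero]
  · simp [pushHomeomorph, ha]

theorem continuousOn_pushHomeomorph :
    ContinuousOn (fun q : E × E => pushHomeomorph x₀ r q.1 q.2) (ball 0 r ×ˢ univ) :=
  continuous_push.continuousOn.congr fun _ hq => pushHomeomorph_apply (mem_ball_zero_iff.1 hq.1) _

theorem continuousOn_pushHomeomorph_symm :
    ContinuousOn (fun q : E × E => (pushHomeomorph x₀ r q.1).symm q.2) (ball 0 r ×ˢ univ) := by
  rintro ⟨a, w⟩ ⟨ha, -⟩
  rw [mem_ball_zero_iff] at ha
  refine ContinuousAt.continuousWithinAt (continuousAt_of_locally_lipschitz (sub_pos.2 ha)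
    (2 * (1 - ‖a‖ / r)⁻¹) fun q hq => ?_)
  have h₁ : dist q.1 a ≤ dist q (a, w) := le_max_left _ _
  have h₂ : dist q.2 w ≤ dist q (a, w) := le_max_right _ _
  have hq₁ : ‖q.1‖ < r := by
    have := norm_le_norm_add_norm_sub' q.1 a
    rw [dist_eq_norm] at h₁
    linarith
  rw [pushHomeomorph_symm_apply hq₁, pushHomeomorph_symm_apply ha, dist_comm]
  refine (dist_pushInv_le ha hq₁ w q.2).trans ?_
  have : 0 < 1 - ‖a‖ / r := sub_pos.2 ((div_lt_one ((norm_nonneg a).trans_lt ha)).2 ha)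
  rw [div_eq_inv_mul, mul_comm 2, mul_assoc, dist_comm w, dist_comm a]
  gcongr
  linarith

end Push

section ChartConj

variable {M E A : Type*} [TopologicalSpace M] [TopologicalSpace E] [TopologicalSpace A]

theorem Function.Injective.mapsTo_of_eq_self_off {α : Type*} {g : α → α} (hg : Injective g)
    {K T : Set α} (hgK : ∀ y ∉ K, g y = y) (hKT : K ⊆ T) : MapsTo g T T := fun y hy => by
  by_cases hyK : y ∈ K
  · by_contra h
    have hgy : g y ∉ K := fun h' => h (hKT h')
    rw [hg (hgK _ hgy)] at hgy
    exact hgy hyK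
  · rwa [hgK y hyK]

theorem Homeomorph.symm_apply_eq_self_off {α : Type*} [TopologicalSpace α] {h : α ≃ₜ α}
    {K : Set α} (hhK : ∀ y ∉ K, h y = y) : ∀ y ∉ K, h.symm y = y := fun y hy =>
  h.symm_apply_eq.2 (hhK y hy).symm

namespace OpenPartialHomeomorph

variable (ψ : OpenPartialHomeomorph M E)

open scoped Classical in
noncomputable def conjMap (g : E → E) (m : M) : M := if m ∈ ψ.source then ψ.symm (g (ψ m)) else m

variable {ψ}

theorem conjMap_of_mem (g : E → E) {m : M} (hm : m ∈ ψ.source) :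
    ψ.conjMap g m = ψ.symm (g (ψ m)) := by simp [conjMap, hm]

theorem conjMap_of_notMem (g : E → E) {m : M} (hm : m ∉ ψ.source) : ψ.conjMap g m = m := by
  simp [conjMap, hm]

theorem conjMap_id (m : M) : ψ.conjMap id m = m := by
  by_cases hm : m ∈ ψ.source
  · exact (conjMap_of_mem _ hm).trans (ψ.left_inv hm)
  · exact conjMap_of_notMem _ hm

theorem conjMap_conjMap {g g' : E → E} (hg' : MapsTo g' ψ.target ψ.target) (m : M) :
    ψ.conjMap g (ψ.conjMap g' m) = ψ.conjMap (g ∘ g') m := by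
  by_cases hm : m ∈ ψ.source
  · have ht := hg' (ψ.map_source hm)
    rw [conjMap_of_mem _ hm, conjMap_of_mem _ (ψ.map_target ht), ψ.right_inv ht,
      conjMap_of_mem _ hm, comp_apply]
  · rw [conjMap_of_notMem _ hm, conjMap_of_notMem _ hm, conjMap_of_notMem _ hm]

theorem conjMap_eq_self {g : E → E} {K : Set E} (hgK : ∀ y ∉ K, g y = y)
    {m : M} (hm : m ∉ ψ.symm '' K) : ψ.conjMap g m = m := by
  by_cases hms : m ∈ ψ.source
  · have hmK : ψ m ∉ K := fun h => hm ⟨ψ m, h, ψ.left_inv hms⟩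
    rw [conjMap_of_mem _ hms, hgK _ hmK, ψ.left_inv hms]
  · exact conjMap_of_notMem _ hms

theorem continuousOn_conjMap [T2Space M] {G : A → E → E} {s : Set A} {K : Set E}
    (hK : IsCompact K) (hKt : K ⊆ ψ.target)
    (hG : ContinuousOn (fun q : A × E => G q.1 q.2) (s ×ˢ univ))
    (hGt : ∀ a ∈ s, MapsTo (G a) ψ.target ψ.target) (hGK : ∀ a, ∀ y ∉ K, G a y = y) :
    ContinuousOn (fun q : A × M => ψ.conjMap (G q.1) q.2) (s ×ˢ univ) := by
  rintro ⟨a, m⟩ ⟨ha, -⟩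
  by_cases hm : m ∈ ψ.source
  · have hev : (fun q : A × M => ψ.conjMap (G q.1) q.2) =ᶠ[𝓝 (a, m)]
        fun q => ψ.symm (G q.1 (ψ q.2)) :=
      (ψ.open_source.preimage continuous_snd).mem_nhds hm |> eventually_of_mem <|
        fun q hq => conjMap_of_mem _ hq
    refine ContinuousWithinAt.congr_of_eventuallyEq ?_
      (eventually_nhdsWithin_of_eventually_nhds hev) (conjMap_of_mem _ hm)
    refine (ψ.continuousAt_symm (hGt a ha (ψ.map_source hm))).comp_continuousWithinAt
      (f := fun q : A × M => G q.1 (ψ q.2)) ?_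
    refine (hG (a, ψ m) ⟨ha, trivial⟩).comp (f := fun q : A × M => (q.1, ψ q.2))
      (continuousWithinAt_fst.prodMk
        ((ψ.continuousAt hm).comp (x := (a, m)) continuousAt_snd).continuousWithinAt) ?_
    exact fun q hq => ⟨hq.1, trivial⟩
  · have hKm : m ∉ ψ.symm '' K := fun ⟨y, hy, hym⟩ => hm (hym ▸ ψ.map_target (hKt hy))
    have hclosed : IsClosed (ψ.symm '' K) :=
      (hK.image_of_continuousOn (ψ.continuousOn_symm.mono hKt)).isClosed
    have hev : (fun q : A × M => ψ.conjMap (G q.1) q.2) =ᶠ[𝓝 (a, m)] Prod.snd :=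
      (hclosed.isOpen_compl.preimage continuous_snd).mem_nhds hKm |> eventually_of_mem <|
        fun q hq => conjMap_eq_self (hGK q.1) hq
    exact (continuous_snd.continuousAt.congr hev.symm).continuousWithinAt

variable [T2Space M] {K : Set E}

theorem continuous_conjMap (hK : IsCompact K) (hKt : K ⊆ ψ.target) {g : E → E}
    (hg : Continuous g) (hgt : MapsTo g ψ.target ψ.target) (hgK : ∀ y ∉ K, g y = y) :
    Continuous (ψ.conjMap g) := by
  have h := continuousOn_conjMap (G := fun _ : Unit => g) (s := univ) hK hKt
    (hg.comp continuous_snd).continuousOn (fun _ _ => hgt) fun _ => hgK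
  exact (continuousOn_univ.1 (by simpa using h)).comp (Continuous.prodMk_right ())

noncomputable def conjHomeomorph (hK : IsCompact K) (hKt : K ⊆ ψ.target) (h : E ≃ₜ E)
    (hhK : ∀ y ∉ K, h y = y) : M ≃ₜ M where
  toFun := ψ.conjMap h
  invFun := ψ.conjMap h.symm
  left_inv m := by
    rw [conjMap_conjMap (h.injective.mapsTo_of_eq_self_off hhK hKt), h.symm_comp_self,
      conjMap_id]
  right_inv m := by
    rw [conjMap_conjMap (h.symm.injective.mapsTo_of_eq_self_off
      (Homeomorph.symm_apply_eq_self_off hhK) hKt), h.self_comp_symm, conjMap_id]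
  continuous_toFun := continuous_conjMap hK hKt h.continuous
    (h.injective.mapsTo_of_eq_self_off hhK hKt) hhK
  continuous_invFun := continuous_conjMap hK hKt h.symm.continuous
    (h.symm.injective.mapsTo_of_eq_self_off (Homeomorph.symm_apply_eq_self_off hhK) hKt)
    (Homeomorph.symm_apply_eq_self_off hhK)

end OpenPartialHomeomorph

end ChartConj

section ComposeList

variable {S M C : Type*} [TopologicalSpace M] [TopologicalSpace C]

def Homeomorph.composeList (f : S → M ≃ₜ M) : List S → M ≃ₜ M
  | [] => Homeomorph.refl M
  | s :: l => (f s).trans (composeList f l)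

namespace Homeomorph

theorem composeList_apply_of_forall_eq {f : S → M ≃ₜ M} {l : List S} {x : M}
    (h : ∀ s ∈ l, f s x = x) : composeList f l x = x := by
  induction l with
  | nil => rfl
  | cons s l ih =>
    show composeList f l (f s x) = x
    rw [h s List.mem_cons_self]
    exact ih fun t ht => h t (List.mem_cons_of_mem _ ht)

theorem composeList_apply_of_nodup {f : S → M ≃ₜ M} {l : List S} (hl : l.Nodup) {s : S}
    (hs : s ∈ l) {x y : M} (hxy : f s x = y) (hx : ∀ t ∈ l, t ≠ s → f t x = x)
    (hy : ∀ t ∈ l, t ≠ s → f t y = y) : composeList f l x = y := by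
  induction l with
  | nil => cases hs
  | cons t l ih =>
    rw [List.nodup_cons] at hl
    show composeList f l (f t x) = y
    rcases eq_or_ne t s with rfl | hts
    · rw [hxy]
      exact composeList_apply_of_forall_eq fun u hu =>
        hy u (List.mem_cons_of_mem _ hu) (ne_of_mem_of_not_mem hu hl.1)
    · rw [hx t List.mem_cons_self hts]
      exact ih hl.2 ((List.mem_cons.1 hs).resolve_left hts.symm)
        (fun u hu => hx u (List.mem_cons_of_mem _ hu)) fun u hu => hy u (List.mem_cons_of_mem _ hu)

variable {f : S → C → M ≃ₜ M} {D : Set C}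

theorem continuousOn_composeList (hf : ∀ s, ContinuousOn (fun q : C × M => f s q.1 q.2) (D ×ˢ univ))
    (l : List S) : ContinuousOn (fun q : C × M => composeList (f · q.1) l q.2) (D ×ˢ univ) := by
  induction l with
  | nil => exact continuousOn_snd
  | cons s l ih => exact ih.comp (continuousOn_fst.prodMk (hf s)) fun q hq => ⟨hq.1, trivial⟩

theorem continuousOn_composeList_symm
    (hf : ∀ s, ContinuousOn (fun q : C × M => (f s q.1).symm q.2) (D ×ˢ univ)) (l : List S) :
    ContinuousOn (fun q : C × M => (composeList (f · q.1) l).symm q.2) (D ×ˢ univ) := by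
  induction l with
  | nil => exact continuousOn_snd
  | cons s l ih => exact (hf s).comp (continuousOn_fst.prodMk ih) fun q hq => ⟨hq.1, trivial⟩

end Homeomorph

end ComposeList

noncomputable section ChartPush

variable {E M C : Type*} [NormedAddCommGroup E] [NormedSpace ℝ E] [ProperSpace E]
  [TopologicalSpace M] [T2Space M] [TopologicalSpace C]
  {ψ : OpenPartialHomeomorph M E} {x₀ : E} {r : ℝ}

def chartPush (ψ : OpenPartialHomeomorph M E) (x₀ : E) (hr : closedBall x₀ r ⊆ ψ.target)
    (a : E) : M ≃ₜ M :=
  ψ.conjHomeomorph (isCompact_closedBall x₀ r) hr (pushHomeomorph x₀ r a) fun _ =>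
    pushHomeomorph_apply_of_notMem

variable (hr : closedBall x₀ r ⊆ ψ.target)

theorem chartPush_apply_of_notMem (a : E) {m : M} (hm : m ∉ ψ.symm '' closedBall x₀ r) :
    chartPush ψ x₀ hr a m = m :=
  OpenPartialHomeomorph.conjMap_eq_self (fun _ => pushHomeomorph_apply_of_notMem) hm

theorem chartPush_apply_center {a : E} (ha : ‖a‖ < r) :
    chartPush ψ x₀ hr a (ψ.symm x₀) = ψ.symm (x₀ + a) := by
  have hx₀ : x₀ ∈ ψ.target := hr (mem_closedBall_self ((norm_nonneg a).trans ha.le))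
  show ψ.conjMap _ _ = _
  rw [OpenPartialHomeomorph.conjMap_of_mem _ (ψ.map_target hx₀), ψ.right_inv hx₀,
    pushHomeomorph_self ha]

theorem continuousOn_chartPush {a : C → E} {D : Set C} (ha : ContinuousOn a D)
    (haD : MapsTo a D (ball 0 r)) :
    ContinuousOn (fun q : C × M => chartPush ψ x₀ hr (a q.1) q.2) (D ×ˢ univ) := by
  have hf : ContinuousOn (fun q : C × E => (a q.1, q.2)) (D ×ˢ univ) :=
    (ha.comp continuousOn_fst fun _ hq => (mem_prod.1 hq).1).prodMk continuousOn_snd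
  have hG := continuousOn_pushHomeomorph (x₀ := x₀) (r := r) |>.comp hf
    fun q hq => ⟨haD hq.1, trivial⟩
  exact OpenPartialHomeomorph.continuousOn_conjMap (G := fun c => pushHomeomorph x₀ r (a c))
    (isCompact_closedBall x₀ r) hr hG
    (fun c _ => (pushHomeomorph x₀ r (a c)).injective.mapsTo_of_eq_self_off
      (fun _ => pushHomeomorph_apply_of_notMem) hr)
    fun _ _ => pushHomeomorph_apply_of_notMem

theorem continuousOn_chartPush_symm {a : C → E} {D : Set C} (ha : ContinuousOn a D)
    (haD : MapsTo a D (ball 0 r)) :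
    ContinuousOn (fun q : C × M => (chartPush ψ x₀ hr (a q.1)).symm q.2) (D ×ˢ univ) := by
  have hK (a : E) : ∀ y ∉ closedBall x₀ r, (pushHomeomorph x₀ r a).symm y = y :=
    Homeomorph.symm_apply_eq_self_off fun _ => pushHomeomorph_apply_of_notMem
  have hf : ContinuousOn (fun q : C × E => (a q.1, q.2)) (D ×ˢ univ) :=
    (ha.comp continuousOn_fst fun _ hq => (mem_prod.1 hq).1).prodMk continuousOn_snd
  have hG := continuousOn_pushHomeomorph_symm (x₀ := x₀) (r := r) |>.comp hf
    fun q hq => ⟨haD hq.1, trivial⟩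
  exact OpenPartialHomeomorph.continuousOn_conjMap (G := fun c => (pushHomeomorph x₀ r (a c)).symm)
    (isCompact_closedBall x₀ r) hr hG
    (fun c _ => (pushHomeomorph x₀ r (a c)).symm.injective.mapsTo_of_eq_self_off (hK _) hr)
    fun _ => hK _

end ChartPush

noncomputable section MultiPush

variable {S E M C : Type*} [Fintype S] [NormedAddCommGroup E] [NormedSpace ℝ E] [ProperSpace E]
  [TopologicalSpace M] [T2Space M] [TopologicalSpace C]
  {ψ : S → OpenPartialHomeomorph M E} {x₀ : S → E} {r : ℝ}

def multiPush (ψ : S → OpenPartialHomeomorph M E) (x₀ : S → E)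
    (hr : ∀ s, closedBall (x₀ s) r ⊆ (ψ s).target) (a : S → E) : M ≃ₜ M :=
  Homeomorph.composeList (fun s => chartPush (ψ s) (x₀ s) (hr s) (a s)) Finset.univ.toList

variable (hr : ∀ s, closedBall (x₀ s) r ⊆ (ψ s).target)

theorem continuousOn_multiPush {a : C → S → E} {D : Set C} (ha : ContinuousOn a D)
    (haD : MapsTo a D (univ.pi fun _ => ball 0 r)) :
    ContinuousOn (fun q : C × M => multiPush ψ x₀ hr (a q.1) q.2) (D ×ˢ univ) := by
  have h := Homeomorph.continuousOn_composeList
    (f := fun s (c : C) => chartPush (ψ s) (x₀ s) (hr s) (a c s)) (fun s =>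
      continuousOn_chartPush (hr s) (a := fun c => a c s) (D := D)
        ((continuous_apply s).comp_continuousOn ha) fun _ hc => haD hc s trivial)
    Finset.univ.toList
  exact h

theorem continuousOn_multiPush_symm {a : C → S → E} {D : Set C} (ha : ContinuousOn a D)
    (haD : MapsTo a D (univ.pi fun _ => ball 0 r)) :
    ContinuousOn (fun q : C × M => (multiPush ψ x₀ hr (a q.1)).symm q.2) (D ×ˢ univ) := by
  have h := Homeomorph.continuousOn_composeList_symm
    (f := fun s (c : C) => chartPush (ψ s) (x₀ s) (hr s) (a c s)) (fun s =>
      continuousOn_chartPush_symm (hr s) (a := fun c => a c s) (D := D)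
        ((continuous_apply s).comp_continuousOn ha) fun _ hc => haD hc s trivial)
    Finset.univ.toList
  exact h

theorem multiPush_apply_center
    (hdisj : Pairwise (Disjoint on fun s => (ψ s).symm '' closedBall (x₀ s) r)) {a : S → E}
    (ha : ∀ s, ‖a s‖ < r) (s : S) :
    multiPush ψ x₀ hr a ((ψ s).symm (x₀ s)) = (ψ s).symm (x₀ s + a s) := by
  have hx : (ψ s).symm (x₀ s) ∈ (ψ s).symm '' closedBall (x₀ s) r :=
    mem_image_of_mem _ (mem_closedBall_self ((norm_nonneg _).trans (ha s).le))
  have hy : (ψ s).symm (x₀ s + a s) ∈ (ψ s).symm '' closedBall (x₀ s) r :=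
    mem_image_of_mem _ (by simpa [mem_closedBall, dist_eq_norm] using (ha s).le)
  refine Homeomorph.composeList_apply_of_nodup (Finset.nodup_toList _)
    (Finset.mem_toList.2 (Finset.mem_univ s)) (chartPush_apply_center (hr s) (ha s))
    (fun t _ hts => ?_) fun t _ hts => ?_
  · exact chartPush_apply_of_notMem (hr t) _ (disjoint_right.1 (hdisj hts) hx)
  · exact chartPush_apply_of_notMem (hr t) _ (disjoint_right.1 (hdisj hts) hy)

end MultiPush

section Configurations

variable {n : ℕ} {S E M : Type*} [TopologicalSpace M]

theorem exists_chart_radius [Finite S] [PseudoMetricSpace E] [T2Space M] {c₀ : S → M}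
    (hc₀ : Injective c₀) (ψ : S → OpenPartialHomeomorph M E) (hψ : ∀ s, c₀ s ∈ (ψ s).source) :
    ∃ r > 0, (∀ s, closedBall (ψ s (c₀ s)) r ⊆ (ψ s).target) ∧
      Pairwise (Disjoint on fun s => (ψ s).symm '' closedBall (ψ s (c₀ s)) r) := by
  obtain ⟨V, hV, hVdisj⟩ := (finite_range c₀).t2_separation
  have hW : ∀ s, (ψ s).target ∩ (ψ s).symm ⁻¹' V (c₀ s) ∈ 𝓝 (ψ s (c₀ s)) := fun s =>
    ((ψ s).isOpen_inter_preimage_symm (hV _).2).mem_nhds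
      ⟨(ψ s).map_source (hψ s), by rw [mem_preimage, (ψ s).left_inv (hψ s)]; exact (hV _).1⟩
  obtain ⟨r, hr, hr0⟩ := ((eventually_all.2 fun s => eventually_closedBall_subset (hW s))
    |>.filter_mono nhdsWithin_le_nhds |>.and (self_mem_nhdsWithin (s := Ioi (0 : ℝ)))).exists
  refine ⟨r, hr0, fun s => (hr s).trans inter_subset_left, fun s t hst => ?_⟩
  exact (hVdisj (mem_range_self s) (mem_range_self t) (hc₀.ne hst)).mono
    (image_subset_iff.2 fun x hx => (hr s hx).2) (image_subset_iff.2 fun x hx => (hr t hx).2)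

theorem ConfSp.exists_homeomorph_family [Fintype S] [NormedAddCommGroup E] [NormedSpace ℝ E]
    [ProperSpace E] [ChartedSpace E M] [T2Space M] (c₀ : ConfSp S M) :
    ∃ U ∈ 𝓝 c₀, ∃ g : ConfSp S M → M ≃ₜ M,
      ContinuousOn (fun q : ConfSp S M × M => g q.1 q.2) (U ×ˢ univ) ∧
      ContinuousOn (fun q : ConfSp S M × M => (g q.1).symm q.2) (U ×ˢ univ) ∧
      ∀ c ∈ U, ∀ s, g c (c₀.1 s) = c.1 s := by
  set ψ := fun s => chartAt E (c₀.1 s)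
  have hψ : ∀ s, c₀.1 s ∈ (ψ s).source := fun s => mem_chart_source E _
  set x₀ := fun s => ψ s (c₀.1 s)
  obtain ⟨r, hr0, hr, hdisj⟩ := exists_chart_radius c₀.2 ψ hψ
  set U : Set (ConfSp S M) := {c | ∀ s, c.1 s ∈ (ψ s).source ∩ ψ s ⁻¹' ball (x₀ s) r}
  set disp : ConfSp S M → S → E := fun c s => ψ s (c.1 s) - x₀ s
  have heval : ∀ s, Continuous fun c : ConfSp S M => c.1 s := fun s =>
    (continuous_apply s).comp continuous_subtype_val
  have hU : U ∈ 𝓝 c₀ := eventually_all.2 fun s => (heval s).continuousAt.preimage_mem_nhds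
    (((ψ s).isOpen_inter_preimage isOpen_ball).mem_nhds ⟨hψ s, mem_ball_self hr0⟩)
  have hdisp : MapsTo disp U (univ.pi fun _ => ball 0 r) := fun c hc s _ =>
    mem_ball_zero_iff.2 (mem_ball_iff_norm.1 (hc s).2)
  have hdispc : ContinuousOn disp U := continuousOn_pi.2 fun s =>
    ((ψ s).continuousOn.comp (heval s).continuousOn fun c hc => (hc s).1).sub continuousOn_const
  refine ⟨U, hU, fun c => multiPush ψ x₀ hr (disp c), continuousOn_multiPush hr hdispc hdisp,
    continuousOn_multiPush_symm hr hdispc hdisp, fun c hc s => ?_⟩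
  have := multiPush_apply_center hr hdisj (fun s => mem_ball_zero_iff.1 (hdisp hc s trivial)) s
  rwa [(ψ s).left_inv (hψ s), add_sub_cancel, (ψ s).left_inv (hc s).1] at this

def EmbSp.homeomorphComp [TopologicalSpace S] (h : M ≃ₜ M) (e : EmbSp n S M) : EmbSp n S M :=
  ⟨(h : C(M, M)).comp e.1, h.isOpenEmbedding.comp e.2⟩

theorem hasTransport_evalOrigins [TopologicalSpace S] [LocallyCompactSpace M]
    {U : Set (ConfSp S M)} {c₀ : ConfSp S M} {g : ConfSp S M → M ≃ₜ M}
    (hg : ContinuousOn (fun q : ConfSp S M × M => g q.1 q.2) (U ×ˢ univ))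
    (hg' : ContinuousOn (fun q : ConfSp S M × M => (g q.1).symm q.2) (U ×ˢ univ))
    (hmove : ∀ c ∈ U, ∀ s, g c (c₀.1 s) = c.1 s) : HasTransport (evalOrigins n S M) id U := by
  refine ⟨fun c c' => EmbSp.homeomorphComp ((g c).symm.trans (g c')), ?_, ?_, ?_, ?_⟩
  · have hcomp : ContinuousOn (fun q : ConfSp S M × ConfSp S M =>
        (((g q.1).symm.trans (g q.2) : M ≃ₜ M) : C(M, M))) (U ×ˢ U) := by
      refine ContinuousMap.continuousOn_of_continuousOn_uncurry _ ?_
      refine (hg.comp (f := fun q : (ConfSp S M × ConfSp S M) × M => (q.1.2, (g q.1.1).symm q.2))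
        ((continuous_snd.comp continuous_fst).continuousOn.prodMk
          (hg'.comp (f := fun q : (ConfSp S M × ConfSp S M) × M => (q.1.1, q.2))
            (by fun_prop) fun q hq => ⟨hq.1.1, trivial⟩)) fun q hq => ⟨hq.1.2, trivial⟩)
    refine IsInducing.subtypeVal.continuousOn_iff.2 ?_
    exact (hcomp.comp continuousOn_fst fun q hq => hq.1).compCM
      (continuous_subtype_val.comp continuous_snd).continuousOn
  · intro c hc c' hc' e he
    refine Subtype.ext (funext fun s => ?_)
    have hes : e.1 (0, s) = c.1 s := congrFun (congrArg Subtype.val he) s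
    show g c' ((g c).symm (e.1 (0, s))) = c'.1 s
    rw [hes, ← hmove c hc s, Homeomorph.symm_apply_apply, hmove c' hc' s]
  · exact fun c _ e _ => Subtype.ext (ContinuousMap.ext fun x => (g c).apply_symm_apply _)
  · exact fun c _ c' _ c'' _ e _ => Subtype.ext (ContinuousMap.ext fun x =>
      congrArg (g c'') ((g c').symm_apply_apply _))

theorem locallyTransported_evalOrigins [TopologicalSpace S] [Fintype S] [NormedAddCommGroup E]
    [NormedSpace ℝ E] [ProperSpace E] [ChartedSpace E M] [T2Space M] :
    LocallyTransported (evalOrigins n S M) := fun c₀ => by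
  have := ChartedSpace.locallyCompactSpace E M
  obtain ⟨U, hU, g, hg, hg', hmove⟩ := ConfSp.exists_homeomorph_family (E := E) c₀
  exact ⟨U, hU, hasTransport_evalOrigins hg hg' hmove⟩

end Configurations

theorem statement3_general (n : ℕ) (M : Type*) [TopologicalSpace M]
    [ChartedSpace (EuclideanSpace ℝ (Fin n)) M] [T2Space M]
    (S : Type*) [Fintype S] [TopologicalSpace S] :
    IsSerreFibration (evalOrigins n S M) :=
  (locallyTransported_evalOrigins (E := EuclideanSpace ℝ (Fin n))).isSerreFibration

/-- For an `n`-manifold `M` and a finite set `S`, evaluation at the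
origins `Emb(ℝⁿ × S, M) → Conf(S, M)` is a Serre fibration. -/
theorem statement3 (n : ℕ) (M : Type*) [TopologicalSpace M]
    [ChartedSpace (EuclideanSpace ℝ (Fin n)) M] [T2Space M] [SecondCountableTopology M]
    (S : Type*) [Fintype S] [TopologicalSpace S] [DiscreteTopology S] :
    IsSerreFibration (evalOrigins n S M) :=
  statement3_general n M S
end
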